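/- arXiv:0906.1297 — 4 statements merged into one kernel-verified Lean document; each statement's English description precedes it below -/
import Mathlib

section
/- With ρ as in the family ρ = Σ_{m,n} x_{mn} |m,n⟩⟨n,m| + Σ_k |k⟩⟨k| ⊗ (M_k on indices < k, N_k on indices > k), if ρ is positive semidefinite, then the set of negative eigenvalues of the partial transpose ρ^Γ (with multiplicity) equals the set of negative eigenvalues of the d_A × d_A matrix X = (x_{mn}). -/
/-!
Split the indices of `ρ^Γ` into the pairs `(k, k)` and the rest. `ρ^Γ` does not couple the two
sets: on the pairs `(k, k)` it is `X`, and on the rest it is the transpose of the block-diagonal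
part, with respect to the first index, of the corresponding principal submatrix of `ρ`, i.e. of
`⊕ₖ (M_k ⊕ N_k)`. A pinching of a positive semidefinite matrix is positive semidefinite (Schur
product with the Gram matrix of the block indicators), so the characteristic polynomial of `ρ^Γ`
is that of `X` times one whose roots are all nonnegative.
-/

open Complex Matrix BigOperators
open scoped ComplexOrder

noncomputable section

def PT {dA dB : ℕ} (ρ : Matrix (Fin dA × Fin dB) (Fin dA × Fin dB) ℂ) :
    Matrix (Fin dA × Fin dB) (Fin dA × Fin dB) ℂ :=
  fun p q => ρ (p.1, q.2) (q.1, p.2)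

def famState (dA dB : ℕ) (x : ℕ → ℕ → ℂ) (M N : ℕ → ℕ → ℕ → ℂ) :
    Matrix (Fin dA × Fin dB) (Fin dA × Fin dB) ℂ :=
  fun p q =>
    (if (p.2 : ℕ) = (q.1 : ℕ) ∧ (q.2 : ℕ) = (p.1 : ℕ) then x p.1 q.1 else 0) +
    (if p.1 = q.1 ∧ (p.2 : ℕ) < (p.1 : ℕ) ∧ (q.2 : ℕ) < (q.1 : ℕ) then M p.1 p.2 q.2 else 0) +
    (if p.1 = q.1 ∧ (p.1 : ℕ) < (p.2 : ℕ) ∧ (q.1 : ℕ) < (q.2 : ℕ) then N p.1 p.2 q.2 else 0)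

open Polynomial

namespace Matrix

variable {m : Type*} [Fintype m] [DecidableEq m]

theorem charpoly_eq_mul_of_twoBlockTriangular {R : Type*} [CommRing R] (A : Matrix m m R)
    (p : m → Prop) [DecidablePred p] (h : ∀ i, p i → ∀ j, ¬p j → A i j = 0) :
    A.charpoly =
      (toSquareBlockProp A p).charpoly * (toSquareBlockProp A fun i => ¬p i).charpoly := by
  have hblock : ∀ (q : m → Prop) [DecidablePred q], charmatrix (toSquareBlockProp A q) =
      toSquareBlockProp (charmatrix A) q := fun q _ => by
    ext i j : 1
    simp [charmatrix_apply, toSquareBlockProp_def, diagonal_apply, Subtype.coe_inj]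
  rw [charpoly, twoBlockTriangular_det' (charmatrix A) p, charpoly, charpoly, hblock, hblock]
  intro i hi j hj
  rw [charmatrix_apply_ne A i j (fun hij => hj (hij ▸ hi)), h i hi j hj, map_zero, neg_zero]

section RCLike

variable {𝕜 : Type*} [RCLike 𝕜] {n l : Type*} [Fintype n] [DecidableEq n] [Fintype l]
  [DecidableEq l]

theorem IsHermitian.eigenvalues_eq_add_of_charpoly_eq_mul {A : Matrix m m 𝕜} {B : Matrix n n 𝕜}
    {C : Matrix l l 𝕜} (hA : A.IsHermitian) (hB : B.IsHermitian) (hC : C.IsHermitian)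
    (h : A.charpoly = B.charpoly * C.charpoly) :
    Finset.univ.val.map hA.eigenvalues =
      Finset.univ.val.map hB.eigenvalues + Finset.univ.val.map hC.eigenvalues := by
  apply Multiset.map_injective (RCLike.ofReal_injective (K := 𝕜))
  have hroots := congrArg roots h
  rw [roots_mul ((B.charpoly_monic.mul C.charpoly_monic).ne_zero),
    hA.roots_charpoly_eq_eigenvalues, hB.roots_charpoly_eq_eigenvalues,
    hC.roots_charpoly_eq_eigenvalues] at hroots
  simpa only [Multiset.map_map, Multiset.map_add] using hroots

theorem IsHermitian.filter_eigenvalues_neg_eq_of_charpoly_eq_mul {A : Matrix m m 𝕜}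
    {B : Matrix n n 𝕜} {C : Matrix l l 𝕜} (hA : A.IsHermitian) (hB : B.IsHermitian)
    (hC : C.PosSemidef) (h : A.charpoly = B.charpoly * C.charpoly) :
    (Finset.univ.val.map hA.eigenvalues).filter (· < 0) =
      (Finset.univ.val.map hB.eigenvalues).filter (· < 0) := by
  have hC_nonneg : (Finset.univ.val.map hC.isHermitian.eigenvalues).filter (· < 0) = 0 := by
    simp only [Multiset.filter_eq_nil, Multiset.mem_map, Finset.mem_val, Finset.mem_univ,
      true_and, not_lt]
    rintro _ ⟨i, rfl⟩
    exact hC.eigenvalues_nonneg i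
  rw [hA.eigenvalues_eq_add_of_charpoly_eq_mul hB hC.isHermitian h, Multiset.filter_add,
    hC_nonneg, add_zero]

end RCLike

def pinching {ι κ α : Type*} [DecidableEq κ] [Zero α] (f : ι → κ) (A : Matrix ι ι α) :
    Matrix ι ι α :=
  of fun i j => if f i = f j then A i j else 0

theorem PosSemidef.pinching {𝕜 ι κ : Type*} [RCLike 𝕜] [Finite ι] [Fintype κ] [DecidableEq κ]
    {A : Matrix ι ι 𝕜} (hA : A.PosSemidef) (f : ι → κ) : (A.pinching f).PosSemidef := by
  let F : Matrix κ ι 𝕜 := of fun k i => if f i = k then 1 else 0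
  have hF : A.pinching f = A ⊙ (Fᴴ * F) := by
    ext i j
    by_cases hij : f i = f j <;> simp [Matrix.pinching, F, mul_apply, hij]
  rw [hF]
  exact hA.hadamard (posSemidef_conjTranspose_mul_self F)

end Matrix

section FamState

variable {dA dB : ℕ}

def IsDiagIndex (p : Fin dA × Fin dB) : Prop := (p.2 : ℕ) = p.1

instance : DecidablePred (IsDiagIndex (dA := dA) (dB := dB)) :=
  fun p => inferInstanceAs (Decidable ((p.2 : ℕ) = p.1))

theorem PT_famState_apply_eq_zero_of_isDiagIndex {x : ℕ → ℕ → ℂ} {M N : ℕ → ℕ → ℕ → ℂ}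
    {p q : Fin dA × Fin dB} (hp : IsDiagIndex p) (hq : ¬IsDiagIndex q) :
    PT (famState dA dB x M N) p q = 0 := by
  unfold IsDiagIndex at hp hq
  simp only [PT, famState, Fin.ext_iff]
  rw [if_neg (fun h => hq h.1), if_neg (by omega), if_neg (by omega), add_zero, add_zero]

def diagIndexEquiv (hd : dA ≤ dB) : Fin dA ≃ {p : Fin dA × Fin dB // IsDiagIndex p} where
  toFun k := ⟨(k, ⟨k, k.2.trans_le hd⟩), rfl⟩
  invFun p := p.1.1
  left_inv _ := rfl
  right_inv := fun ⟨⟨a, b⟩, hp⟩ => by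
    obtain rfl : b = ⟨a, a.2.trans_le hd⟩ := Fin.ext hp
    rfl

theorem charpoly_toSquareBlockProp_PT_famState_diag (hd : dA ≤ dB) (x : ℕ → ℕ → ℂ)
    (M N : ℕ → ℕ → ℕ → ℂ) :
    (toSquareBlockProp (PT (famState dA dB x M N)) IsDiagIndex).charpoly =
      (of fun m n : Fin dA => x m n).charpoly := by
  rw [← charpoly_reindex (diagIndexEquiv hd).symm]
  congr 1
  ext m n
  simp only [PT, famState, diagIndexEquiv, reindex_apply, submatrix_apply, toSquareBlockProp_def,
    of_apply, Equiv.symm_symm, Equiv.coe_fn_mk, and_self, if_true]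
  rw [if_neg fun h => lt_asymm h.2.1 h.2.2, if_neg fun h => lt_asymm h.2.1 h.2.2, add_zero,
    add_zero]

theorem toSquareBlockProp_PT_famState_offDiag (x : ℕ → ℕ → ℂ) (M N : ℕ → ℕ → ℕ → ℂ) :
    toSquareBlockProp (PT (famState dA dB x M N)) (fun p => ¬IsDiagIndex p) =
      ((toSquareBlockProp (famState dA dB x M N) (fun p => ¬IsDiagIndex p)).pinching
        fun p => p.1.1)ᵀ := by
  ext p q
  by_cases h : p.1.1 = q.1.1
  · simp [PT, famState, pinching, toSquareBlockProp_def, h]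
  · have hq := q.2
    unfold IsDiagIndex at hq
    simp [PT, famState, pinching, toSquareBlockProp_def, h, Ne.symm h, hq]

end FamState

/-- for a positive semidefinite state of the family, the multiset of
negative eigenvalues (with multiplicity) of the partial transpose `ρ^Γ` equals the
multiset of negative eigenvalues of the `d_A × d_A` matrix `X = (x_{mn})`. -/
theorem famState_negative_eigenvalues (dA dB : ℕ) (hd : dA ≤ dB)
    (x : ℕ → ℕ → ℂ) (M N : ℕ → ℕ → ℕ → ℂ)
    (hρ : (famState dA dB x M N).PosSemidef)
    (hΓ : (PT (famState dA dB x M N)).IsHermitian)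
    (hX : (Matrix.of fun m n : Fin dA => x m n).IsHermitian) :
    (Finset.univ.val.map hΓ.eigenvalues).filter (fun t => t < 0) =
      (Finset.univ.val.map hX.eigenvalues).filter (fun t => t < 0) := by
  have hOffDiag : (toSquareBlockProp (PT (famState dA dB x M N))
      (fun p => ¬IsDiagIndex p)).PosSemidef := by
    rw [toSquareBlockProp_PT_famState_offDiag]
    exact ((hρ.submatrix Subtype.val).pinching _).transpose
  refine hΓ.filter_eigenvalues_neg_eq_of_charpoly_eq_mul hX hOffDiag ?_
  rw [charpoly_eq_mul_of_twoBlockTriangular _ IsDiagIndex fun p hp q hq =>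
    PT_famState_apply_eq_zero_of_isDiagIndex hp hq, charpoly_toSquareBlockProp_PT_famState_diag hd]
end
end

section
/- With ρ in the family as above and positive semidefinite, ρ^Γ is positive semidefinite if and only if the matrix X = (x_{mn}) is positive semidefinite. -/
open Complex Matrix BigOperators
open scoped ComplexOrder

noncomputable section

def PTE (dA dB : ℕ) : Matrix (Fin dA × Fin dB) (Fin dA) ℂ :=
  fun p m => if p.1 = m ∧ (p.2 : ℕ) = (m : ℕ) then 1 else 0

def PTP (dA dB : ℕ) : Matrix (Fin dA × Fin dB) (Fin dA × Fin dB) ℂ :=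
  Matrix.diagonal fun p => if (p.2 : ℕ) < (p.1 : ℕ) then 1 else 0

def PTQ (dA dB : ℕ) : Matrix (Fin dA × Fin dB) (Fin dA × Fin dB) ℂ :=
  Matrix.diagonal fun p => if (p.1 : ℕ) < (p.2 : ℕ) then 1 else 0

lemma PTP_herm (dA dB : ℕ) : (PTP dA dB)ᴴ = PTP dA dB := by
  ext p q
  by_cases h : p = q
  · subst h
    simp [PTP, Matrix.conjTranspose_apply, apply_ite (star : ℂ → ℂ)]
  · simp [PTP, Matrix.conjTranspose_apply, Matrix.diagonal_apply_ne _ h,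
      Matrix.diagonal_apply_ne _ (Ne.symm h)]

lemma PTQ_herm (dA dB : ℕ) : (PTQ dA dB)ᴴ = PTQ dA dB := by
  ext p q
  by_cases h : p = q
  · subst h
    simp [PTQ, Matrix.conjTranspose_apply, apply_ite (star : ℂ → ℂ)]
  · simp [PTQ, Matrix.conjTranspose_apply, Matrix.diagonal_apply_ne _ h,
      Matrix.diagonal_apply_ne _ (Ne.symm h)]

lemma PTE_entry (dA dB : ℕ) (x : ℕ → ℕ → ℂ) (p q : Fin dA × Fin dB) :
    (PTE dA dB * (Matrix.of fun m n : Fin dA => x m n) * (PTE dA dB)ᴴ) p q =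
      if (p.2 : ℕ) = (p.1 : ℕ) ∧ (q.2 : ℕ) = (q.1 : ℕ) then x p.1 q.1 else 0 := by
  have h1 : ∀ n : Fin dA, (PTE dA dB * (Matrix.of fun m n : Fin dA => x m n)) p n =
      if (p.2 : ℕ) = (p.1 : ℕ) then x p.1 n else 0 := by
    intro n
    rw [Matrix.mul_apply]
    rw [Finset.sum_eq_single p.1]
    · simp [PTE]
    · intro m _ hm
      simp [PTE, Ne.symm hm]
    · simp
  rw [Matrix.mul_apply]
  rw [Finset.sum_eq_single q.1]
  · rw [h1]
    simp only [Matrix.conjTranspose_apply, PTE]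
    by_cases h2 : (q.2 : ℕ) = (q.1 : ℕ) <;> by_cases h3 : (p.2 : ℕ) = (p.1 : ℕ) <;>
      simp [h2, h3]
  · intro n _ hn
    simp [Matrix.conjTranspose_apply, PTE, Ne.symm hn]
  · simp

set_option maxHeartbeats 2000000 in
lemma decomp (dA dB : ℕ) (x : ℕ → ℕ → ℂ) (M N : ℕ → ℕ → ℕ → ℂ) :
    PT (famState dA dB x M N) =
      PTE dA dB * (Matrix.of fun m n : Fin dA => x m n) * (PTE dA dB)ᴴ +
      (PTP dA dB * famState dA dB x M N * (PTP dA dB)ᴴ)ᵀ +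
      (PTQ dA dB * famState dA dB x M N * (PTQ dA dB)ᴴ)ᵀ := by
  rw [PTP_herm, PTQ_herm]
  ext ⟨a, b⟩ ⟨c, d⟩
  rw [Matrix.add_apply, Matrix.add_apply, PTE_entry]
  simp only [PT, famState, Matrix.transpose_apply, PTP, PTQ,
    Matrix.diagonal_mul, Matrix.mul_diagonal]
  simp only [ite_mul, mul_ite, one_mul, mul_one, zero_mul, mul_zero]
  by_cases hac : a = c
  · subst hac
    split_ifs <;> first | rfl | (exfalso; omega) | ring
  · have hca : ¬ (c = a) := fun h => hac h.symm
    simp only [hac, hca, false_and, if_false]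
    split_ifs <;> first | rfl | (exfalso; omega) | ring

/-- for a positive semidefinite state of the family, the partial
transpose `ρ^Γ` is positive semidefinite iff the matrix `X = (x_{mn})` is. -/
theorem famState_PPT_iff_X_posSemidef (dA dB : ℕ) (hd : dA ≤ dB)
    (x : ℕ → ℕ → ℂ) (M N : ℕ → ℕ → ℕ → ℂ)
    (hρ : (famState dA dB x M N).PosSemidef) :
    (PT (famState dA dB x M N)).PosSemidef ↔
      (Matrix.of fun m n : Fin dA => x m n).PosSemidef := by
  constructor
  · intro hPT
    let g : Fin dA → Fin dA × Fin dB := fun m => (m, ⟨(m : ℕ), lt_of_lt_of_le m.isLt hd⟩)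
    have hsub : (Matrix.of fun m n : Fin dA => x m n) =
        (PT (famState dA dB x M N)).submatrix g g := by
      ext m n
      simp only [Matrix.of_apply, Matrix.submatrix_apply, PT, famState, g]
      rw [if_pos (by constructor <;> trivial), if_neg, if_neg]
      · ring
      · rintro ⟨h1, h2, h3⟩
        simp only [Fin.ext_iff] at h1 h2 h3 ⊢
        omega
      · rintro ⟨h1, h2, h3⟩
        simp only [Fin.ext_iff] at h1 h2 h3 ⊢
        omega
    rw [hsub]
    exact hPT.submatrix g
  · intro hX
    rw [decomp]
    exact ((hX.mul_mul_conjTranspose_same _).add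
        ((hρ.mul_mul_conjTranspose_same _).transpose)).add
      ((hρ.mul_mul_conjTranspose_same _).transpose)
end
end

section
/- Let ρ be a density matrix in the family with X matrix of the block form X = ⊕_{i=0}^{d_A/2 - 1} [[0, x_i],[x_i*, 0]] (d_A even). Then ρ^Γ is positive semidefinite if and only if all x_i = 0, and in that case ρ is separable. Hence for this subfamily, ρ is separable if and only if ρ is PPT. -/
open Complex Matrix BigOperators
open scoped ComplexOrder

noncomputable section

def SepState {dA dB : ℕ} (ρ : Matrix (Fin dA × Fin dB) (Fin dA × Fin dB) ℂ) : Prop :=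
  ∃ (n : ℕ) (p : Fin n → ℝ) (A : Fin n → Matrix (Fin dA) (Fin dA) ℂ)
    (B : Fin n → Matrix (Fin dB) (Fin dB) ℂ),
    (∀ i, 0 ≤ p i) ∧ (∑ i, p i = 1) ∧
    (∀ i, (A i).PosSemidef ∧ (A i).trace = 1) ∧
    (∀ i, (B i).PosSemidef ∧ (B i).trace = 1) ∧
    ρ = ∑ i, (p i : ℂ) • (Matrix.kroneckerMap (· * ·) (A i) (B i))

/-!
A positive semidefinite matrix with two vanishing diagonal entries vanishes between them (its
2 × 2 principal minor is `-|A p q|²`). In `ρ^Γ` the diagonal entries at `(2i, 2i)` and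
`(2i+1, 2i+1)` are the zero diagonal entries of `X`, and the entry between them is
`x_{2i,2i+1} = x_i`, so PPT forces every `x_i = 0`. Conversely, when `X = 0` the state is block
diagonal in the first factor, `ρ = Σ_a |a⟩⟨a| ⊗ ρ_a`, hence separable, and separable states are PPT.
-/

namespace Matrix

variable {n : Type*}

theorem posSemidef_single_self_one [Fintype n] [DecidableEq n] (i : n) :
    (single i i (1 : ℂ)).PosSemidef := by
  rw [← diagonal_single]
  exact .diagonal (Pi.single_nonneg.mpr zero_le_one)

namespace PosSemidef

theorem apply_eq_zero_of_diag_eq_zero {A : Matrix n n ℂ} (hA : A.PosSemidef) {p q : n}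
    (hp : A p p = 0) (hq : A q q = 0) : A p q = 0 := by
  have hdet := (hA.submatrix ![p, q]).det_nonneg
  simp only [det_fin_two, submatrix_apply, Matrix.cons_val_zero, Matrix.cons_val_one, hp, hq,
    mul_zero, zero_sub, Left.nonneg_neg_iff] at hdet
  rw [← hA.1.apply q p, Complex.star_def, mul_conj] at hdet
  exact Complex.normSq_eq_zero.mp
    (le_antisymm (Complex.real_le_real.mp (by simpa using hdet)) (Complex.normSq_nonneg _))

theorem ofReal_re_trace [Fintype n] {A : Matrix n n ℂ} (hA : A.PosSemidef) :
    (A.trace.re : ℂ) = A.trace :=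
  (Complex.eq_re_of_ofReal_le (r := 0) (by simpa using hA.trace_nonneg)).symm

theorem exists_trace_one_smul_eq [Fintype n] [DecidableEq n] [Nonempty n] {B : Matrix n n ℂ}
    (hB : B.PosSemidef) :
    ∃ D : Matrix n n ℂ, D.PosSemidef ∧ D.trace = 1 ∧ B = (B.trace.re : ℂ) • D := by
  rw [hB.ofReal_re_trace]
  by_cases h : B.trace = 0
  · obtain ⟨i⟩ := ‹Nonempty n›
    refine ⟨single i i 1, posSemidef_single_self_one i, trace_single_eq_same _ _, ?_⟩
    rw [h, zero_smul, ← hB.trace_eq_zero_iff, h]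
  · refine ⟨B.trace⁻¹ • B, hB.smul ?_, ?_, ?_⟩
    · exact inv_nonneg.mpr hB.trace_nonneg
    · rw [trace_smul, smul_eq_mul, inv_mul_cancel₀ h]
    · rw [smul_smul, mul_inv_cancel₀ h, one_smul]

end PosSemidef

end Matrix

section SepState

variable {dA dB : ℕ}

theorem PT_sum {ι : Type*} (s : Finset ι)
    (ρ : ι → Matrix (Fin dA × Fin dB) (Fin dA × Fin dB) ℂ) :
    PT (∑ i ∈ s, ρ i) = ∑ i ∈ s, PT (ρ i) := by
  ext p q
  simp [PT, Matrix.sum_apply]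

theorem PT_smul (c : ℂ) (ρ : Matrix (Fin dA × Fin dB) (Fin dA × Fin dB) ℂ) :
    PT (c • ρ) = c • PT ρ :=
  rfl

theorem PT_kroneckerMap (A : Matrix (Fin dA) (Fin dA) ℂ) (B : Matrix (Fin dB) (Fin dB) ℂ) :
    PT (kroneckerMap (· * ·) A B) = kroneckerMap (· * ·) A Bᵀ :=
  rfl

theorem SepState.posSemidef_PT {ρ : Matrix (Fin dA × Fin dB) (Fin dA × Fin dB) ℂ}
    (h : SepState ρ) : (PT ρ).PosSemidef := by
  obtain ⟨k, p, A, B, hp, -, hA, hB, rfl⟩ := h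
  rw [PT_sum]
  refine posSemidef_sum _ fun i _ => ?_
  rw [PT_smul, PT_kroneckerMap]
  exact ((hA i).1.kronecker (hB i).1.transpose).smul (Complex.zero_le_real.mpr (hp i))

theorem sepState_of_apply_eq_zero_of_ne
    {ρ : Matrix (Fin dA × Fin dB) (Fin dA × Fin dB) ℂ} (hρ : ρ.PosSemidef) (htr : ρ.trace = 1)
    (hblock : ∀ a a' b b', a ≠ a' → ρ (a, b) (a', b') = 0) : SepState ρ := by
  have : Nonempty (Fin dB) := by
    by_contra h
    rw [not_nonempty_iff] at h
    simp [trace] at htr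
  set B : Fin dA → Matrix (Fin dB) (Fin dB) ℂ := fun a => ρ.submatrix (a, ·) (a, ·)
  have hB a : (B a).PosSemidef := hρ.submatrix _
  choose D hD htrD hBD using fun a => (hB a).exists_trace_one_smul_eq
  refine ⟨dA, fun a => (B a).trace.re, fun a => single a a 1, D, fun a => ?_, ?_,
    fun a => ⟨posSemidef_single_self_one a, trace_single_eq_same _ _⟩, fun a => ⟨hD a, htrD a⟩, ?_⟩
  · exact Complex.zero_le_real.mp ((hB a).ofReal_re_trace ▸ (hB a).trace_nonneg)
  · rw [← Complex.ofReal_inj]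
    push_cast
    simp_rw [(hB _).ofReal_re_trace]
    rw [← htr, trace, Fintype.sum_prod_type]
    rfl
  · ext ⟨a, b⟩ ⟨a', b'⟩
    simp only [coe_smul, Matrix.sum_apply, Matrix.smul_apply, kroneckerMap_apply, single_apply,
      ite_mul, one_mul, zero_mul, smul_ite, real_smul, smul_zero]
    rcases eq_or_ne a a' with rfl | hne
    · simp only [and_self, Finset.sum_ite_eq', Finset.mem_univ, if_true]
      exact congr_fun₂ (hBD a) b b'
    · rw [hblock a a' b b' hne]
      exact (Finset.sum_eq_zero fun c _ => if_neg fun h => hne (h.1.symm.trans h.2)).symm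

end SepState

section famState

variable {dA dB : ℕ} {x : ℕ → ℕ → ℂ} {M N : ℕ → ℕ → ℕ → ℂ}

theorem famState_apply_eq_zero_of_ne {a a' : Fin dA} (hne : a ≠ a') (hx : x a a' = 0)
    (b b' : Fin dB) : famState dA dB x M N (a, b) (a', b') = 0 := by
  simp [famState, hne, hx]

theorem PT_famState_apply {a a' : Fin dA} {b b' : Fin dB} (hb : (b : ℕ) = a)
    (hb' : (b' : ℕ) = a') : PT (famState dA dB x M N) (a, b) (a', b') = x a a' := by
  simp only [PT, famState, hb, hb', and_self, if_true, Fin.ext_iff]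
  grind

theorem x_eq_zero_of_posSemidef_PT_famState (hd : dA ≤ dB)
    (hPT : (PT (famState dA dB x M N)).PosSemidef) {m n : ℕ} (hm : m < dA) (hn : n < dA)
    (hmm : x m m = 0) (hnn : x n n = 0) : x m n = 0 := by
  have entry {k l : ℕ} (hk : k < dA) (hl : l < dA) :
      PT (famState dA dB x M N) (⟨k, hk⟩, ⟨k, hk.trans_le hd⟩) (⟨l, hl⟩, ⟨l, hl.trans_le hd⟩)
        = x k l :=
    PT_famState_apply rfl rfl
  have h := hPT.apply_eq_zero_of_diag_eq_zero ((entry hm hm).trans hmm) ((entry hn hn).trans hnn)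
  rwa [entry] at h

end famState

/-- if the `X` matrix of a density matrix of the family has the block
form `X = ⊕_i [[0, x_i],[x_i*, 0]]` (`d_A = 2s` even), then `ρ^Γ` is positive
semidefinite iff all `x_i = 0`, in which case `ρ` is separable; hence `ρ` is
separable iff it is PPT. -/
theorem famState_block_antidiagonal_X (dA dB s : ℕ) (hd : dA ≤ dB) (hs : dA = 2 * s)
    (x : ℕ → ℕ → ℂ) (M N : ℕ → ℕ → ℕ → ℂ) (xs : ℕ → ℂ)
    (hblock : ∀ m n, m < dA → n < dA →
      x m n = if m = n then 0
        else if m / 2 = n / 2 then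
          (if m % 2 = 0 then xs (m / 2) else starRingEnd ℂ (xs (m / 2)))
        else 0)
    (hρ : (famState dA dB x M N).PosSemidef)
    (htr : (famState dA dB x M N).trace = 1) :
    ((PT (famState dA dB x M N)).PosSemidef ↔ ∀ i < s, xs i = 0) ∧
    ((PT (famState dA dB x M N)).PosSemidef → SepState (famState dA dB x M N)) ∧
    (SepState (famState dA dB x M N) ↔ (PT (famState dA dB x M N)).PosSemidef) := by
  have hx_diag : ∀ m < dA, x m m = 0 := fun m hm => by simp [hblock m m hm hm]
  have hx_pair : ∀ i < s, x (2 * i) (2 * i + 1) = xs i := fun i hi => by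
    rw [hblock _ _ (by omega) (by omega), if_neg (by omega), if_pos (by omega), if_pos (by omega)]
    congr 1
    omega
  have hx_zero : (∀ i < s, xs i = 0) → ∀ m n, m < dA → n < dA → x m n = 0 := by
    intro h m n hm hn
    rw [hblock m n hm hn]
    split_ifs <;> simp [h (m / 2) (by omega)]
  have xs_zero_of_PT : (PT (famState dA dB x M N)).PosSemidef → ∀ i < s, xs i = 0 :=
    fun hPT i hi => hx_pair i hi ▸ x_eq_zero_of_posSemidef_PT_famState hd hPT (by omega)
      (by omega) (hx_diag _ (by omega)) (hx_diag _ (by omega))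
  have sep_of_xs_zero : (∀ i < s, xs i = 0) → SepState (famState dA dB x M N) :=
    fun h => sepState_of_apply_eq_zero_of_ne hρ htr fun a a' b b' hne =>
      famState_apply_eq_zero_of_ne hne (hx_zero h _ _ a.2 a'.2) b b'
  exact ⟨⟨xs_zero_of_PT, fun h => (sep_of_xs_zero h).posSemidef_PT⟩,
    fun h => sep_of_xs_zero (xs_zero_of_PT h),
    ⟨SepState.posSemidef_PT, fun h => sep_of_xs_zero (xs_zero_of_PT h)⟩⟩
end
end

section
/- For a qubit-qudit system ℂ² ⊗ ℂ^{d} consider ρ = x₀₀|0,0⟩⟨0,0| + x₁₁|1,d−1⟩⟨1,d−1| + x₀₁|0,d−1⟩⟨1,0| + x₀₁*|1,0⟩⟨0,d−1| + Σ_{i,j=1}^{d−1} A_{ij}|0,i⟩⟨0,j| + Σ_{i,j=0}^{d−2} B_{ij}|1,i⟩⟨1,j|, with ρ positive semidefinite. Then the negative eigenvalues of ρ^Γ are exactly the negative eigenvalues of the 2×2 matrix [[x₀₀, x₀₁],[x₀₁*, x₁₁]], i.e., ρ is PPT iff x₀₀ x₁₁ ≥ |x₀₁|². -/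
open Complex Matrix BigOperators
open scoped ComplexOrder

noncomputable section

/-- The qubit-qudit family (Eq. (29)):
`ρ = x₀₀|0,0⟩⟨0,0| + x₁₁|1,d−1⟩⟨1,d−1| + x₀₁|0,d−1⟩⟨1,0| + x₀₁*|1,0⟩⟨0,d−1|
  + Σ_{i,j=1}^{d−1} A_{ij}|0,i⟩⟨0,j| + Σ_{i,j=0}^{d−2} B_{ij}|1,i⟩⟨1,j|`. -/
def ρ2d (d : ℕ) (x00 x11 : ℝ) (x01 : ℂ) (A B : ℕ → ℕ → ℂ) :
    Matrix (Fin 2 × Fin d) (Fin 2 × Fin d) ℂ :=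
  fun p q =>
    (if (p.1 : ℕ) = 0 ∧ (p.2 : ℕ) = 0 ∧ (q.1 : ℕ) = 0 ∧ (q.2 : ℕ) = 0 then (x00 : ℂ) else 0) +
    (if (p.1 : ℕ) = 1 ∧ (p.2 : ℕ) = d - 1 ∧ (q.1 : ℕ) = 1 ∧ (q.2 : ℕ) = d - 1
      then (x11 : ℂ) else 0) +
    (if (p.1 : ℕ) = 0 ∧ (p.2 : ℕ) = d - 1 ∧ (q.1 : ℕ) = 1 ∧ (q.2 : ℕ) = 0 then x01 else 0) +
    (if (p.1 : ℕ) = 1 ∧ (p.2 : ℕ) = 0 ∧ (q.1 : ℕ) = 0 ∧ (q.2 : ℕ) = d - 1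
      then starRingEnd ℂ x01 else 0) +
    (if (p.1 : ℕ) = 0 ∧ (q.1 : ℕ) = 0 ∧ 1 ≤ (p.2 : ℕ) ∧ 1 ≤ (q.2 : ℕ)
      then A p.2 q.2 else 0) +
    (if (p.1 : ℕ) = 1 ∧ (q.1 : ℕ) = 1 ∧ (p.2 : ℕ) < d - 1 ∧ (q.2 : ℕ) < d - 1
      then B p.2 q.2 else 0)

/-!
In the ordering |0,0⟩, |1,d−1⟩ | |0,i⟩ (1 ≤ i ≤ d−1) | |1,j⟩ (0 ≤ j ≤ d−2) of the basis, `ρ^Γ`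
is block diagonal with blocks `X = [[x₀₀, x₀₁], [x₀₁*, x₁₁]]`, `Aᵀ` and `Bᵀ`. The last two are
transposes of principal submatrices of `ρ`, hence positive semidefinite, so the characteristic
polynomial of `ρ^Γ` is that of `X` times that of a positive semidefinite matrix, and the negative
eigenvalues of `ρ^Γ`, with multiplicity, are those of `X`. In particular `ρ^Γ ≥ 0` iff `X ≥ 0`,
and since the diagonal entries `x₀₀`, `x₁₁` of `ρ` are nonnegative this says `x₀₀ x₁₁ ≥ |x₀₁|²`.
-/

namespace Matrix

variable {𝕜 : Type*} [RCLike 𝕜] {l m n : Type*} [Fintype l] [Fintype m] [Fintype n]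

lemma PosSemidef.fromBlocks_zero {A : Matrix m m 𝕜} {B : Matrix n n 𝕜} (hA : A.PosSemidef)
    (hB : B.PosSemidef) : (fromBlocks A 0 0 B).PosSemidef := by
  refine .of_dotProduct_mulVec_nonneg (hA.1.fromBlocks (by simp) hB.1) fun x => ?_
  have h := add_nonneg (hA.dotProduct_mulVec_nonneg (x ∘ Sum.inl))
    (hB.dotProduct_mulVec_nonneg (x ∘ Sum.inr))
  simpa [fromBlocks_mulVec, dotProduct, Fintype.sum_sum_type] using h

variable [DecidableEq l] [DecidableEq m] [DecidableEq n]

lemma IsHermitian.posSemidef_iff_filter_neg_eigenvalues_eq_zero {M : Matrix n n 𝕜}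
    (hM : M.IsHermitian) :
    M.PosSemidef ↔ (Finset.univ.val.map hM.eigenvalues).filter (· < 0) = 0 := by
  simp [hM.posSemidef_iff_eigenvalues_nonneg, Pi.le_def, Multiset.filter_eq_nil]

lemma IsHermitian.eigenvalues_map_eq_add_of_charpoly_eq_mul {M : Matrix l l 𝕜}
    {X : Matrix m m 𝕜} {Y : Matrix n n 𝕜} (hM : M.IsHermitian) (hX : X.IsHermitian)
    (hY : Y.IsHermitian) (h : M.charpoly = X.charpoly * Y.charpoly) :
    Finset.univ.val.map hM.eigenvalues =
      Finset.univ.val.map hX.eigenvalues + Finset.univ.val.map hY.eigenvalues := by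
  apply Multiset.map_injective (RCLike.ofReal_injective (K := 𝕜))
  rw [Multiset.map_add, Multiset.map_map, Multiset.map_map, Multiset.map_map,
    ← hM.roots_charpoly_eq_eigenvalues, ← hX.roots_charpoly_eq_eigenvalues,
    ← hY.roots_charpoly_eq_eigenvalues, h,
    Polynomial.roots_mul (X.charpoly_monic.mul Y.charpoly_monic).ne_zero]

lemma IsHermitian.filter_neg_eigenvalues_eq_of_charpoly_eq_mul {M : Matrix l l 𝕜}
    {X : Matrix m m 𝕜} {Y : Matrix n n 𝕜} (hM : M.IsHermitian) (hX : X.IsHermitian)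
    (hY : Y.PosSemidef) (h : M.charpoly = X.charpoly * Y.charpoly) :
    (Finset.univ.val.map hM.eigenvalues).filter (· < 0) =
      (Finset.univ.val.map hX.eigenvalues).filter (· < 0) := by
  rw [hM.eigenvalues_map_eq_add_of_charpoly_eq_mul hX hY.1 h, Multiset.filter_add,
    hY.1.posSemidef_iff_filter_neg_eigenvalues_eq_zero.1 hY, add_zero]

open ComplexConjugate in
lemma posSemidef_fin_two_iff {a b : ℝ} {c : 𝕜} :
    (!![(a : 𝕜), c; conj c, (b : 𝕜)]).PosSemidef ↔ 0 ≤ a ∧ 0 ≤ b ∧ ‖c‖ ^ 2 ≤ a * b := by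
  set M := !![(a : 𝕜), c; conj c, (b : 𝕜)]
  have hdet : M.det = ((a * b - ‖c‖ ^ 2 : ℝ) : 𝕜) := by
    simp [M, det_fin_two_of, RCLike.mul_conj]
  have htrace : M.trace = ((a + b : ℝ) : 𝕜) := by simp [M, trace_fin_two_of]
  constructor
  · intro hM
    have ha : 0 ≤ a := by simpa [M] using hM.diag_nonneg (i := 0)
    have hb : 0 ≤ b := by simpa [M] using hM.diag_nonneg (i := 1)
    have hdet_nonneg : 0 ≤ a * b - ‖c‖ ^ 2 := RCLike.ofReal_nonneg.mp (hdet ▸ hM.det_nonneg)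
    exact ⟨ha, hb, by linarith⟩
  · rintro ⟨ha, hb, hc⟩
    have hM : M.IsHermitian := by
      ext i j
      fin_cases i <;> fin_cases j <;> simp [M]
    have hsum := hM.trace_eq_sum_eigenvalues
    have hprod := hM.det_eq_prod_eigenvalues
    rw [htrace, Fin.sum_univ_two, ← RCLike.ofReal_add, RCLike.ofReal_inj] at hsum
    rw [hdet, Fin.prod_univ_two, ← RCLike.ofReal_mul, RCLike.ofReal_inj] at hprod
    rw [hM.posSemidef_iff_eigenvalues_nonneg, Pi.le_def, Fin.forall_fin_two]
    simp only [Pi.zero_apply]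
    -- two reals with nonnegative sum and product are nonnegative
    constructor <;> nlinarith

end Matrix

def ptBlockIndex {d : ℕ} (hd : 0 < d) : Fin 2 ⊕ (Fin (d - 1) ⊕ Fin (d - 1)) → Fin 2 × Fin d
  | .inl 0 => (0, ⟨0, hd⟩)
  | .inl 1 => (1, ⟨d - 1, by omega⟩)
  | .inr (.inl i) => (0, ⟨i + 1, by omega⟩)
  | .inr (.inr j) => (1, ⟨j, by omega⟩)

lemma ptBlockIndex_bijective {d : ℕ} (hd : 0 < d) : Function.Bijective (ptBlockIndex hd) := by
  rw [Fintype.bijective_iff_injective_and_card]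
  refine ⟨?_, by simp; omega⟩
  rintro (i | i | i) (j | j | j) h
  all_goals (try fin_cases i) <;> (try fin_cases j)
  all_goals simp [ptBlockIndex, Prod.ext_iff, Fin.ext_iff] at h ⊢ <;> omega

lemma PT_ρ2d_submatrix_ptBlockIndex {d : ℕ} (hd : 0 < d) (x00 x11 : ℝ) (x01 : ℂ)
    (A B : ℕ → ℕ → ℂ) :
    (PT (ρ2d d x00 x11 x01 A B)).submatrix (ptBlockIndex hd) (ptBlockIndex hd) =
      fromBlocks !![(x00 : ℂ), x01; starRingEnd ℂ x01, (x11 : ℂ)] 0 0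
        (fromBlocks (of fun i j : Fin (d - 1) => A (j + 1) (i + 1)) 0 0
          (of fun i j : Fin (d - 1) => B j i)) := by
  have hlt (i : Fin (d - 1)) : (i : ℕ) ≠ d - 1 := i.isLt.ne
  ext (i | i | i) (j | j | j)
  all_goals (try fin_cases i) <;> (try fin_cases j)
  all_goals simp [PT, ρ2d, ptBlockIndex, hlt]

lemma exists_posSemidef_charpoly_PT_ρ2d_eq_mul {d : ℕ} (hd : 0 < d) {x00 x11 : ℝ} {x01 : ℂ}
    {A B : ℕ → ℕ → ℂ} (hρ : (ρ2d d x00 x11 x01 A B).PosSemidef) :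
    ∃ Y : Matrix (Fin (d - 1) ⊕ Fin (d - 1)) (Fin (d - 1) ⊕ Fin (d - 1)) ℂ, Y.PosSemidef ∧
      (PT (ρ2d d x00 x11 x01 A B)).charpoly =
        (!![(x00 : ℂ), x01; starRingEnd ℂ x01, (x11 : ℂ)]).charpoly * Y.charpoly := by
  set ρ := ρ2d d x00 x11 x01 A B
  set e := ptBlockIndex hd
  have hA : (of fun i j : Fin (d - 1) => A (j + 1) (i + 1)).PosSemidef := by
    rw [show of (fun i j : Fin (d - 1) => A (j + 1) (i + 1)) =
        (ρ.submatrix (e ∘ .inr ∘ .inl) (e ∘ .inr ∘ .inl))ᵀ by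
      ext; simp [ρ, e, ρ2d, ptBlockIndex]]
    exact (hρ.submatrix _).transpose
  have hB : (of fun i j : Fin (d - 1) => B j i).PosSemidef := by
    rw [show of (fun i j : Fin (d - 1) => B j i) =
        (ρ.submatrix (e ∘ .inr ∘ .inr) (e ∘ .inr ∘ .inr))ᵀ by
      ext; simp [ρ, e, ρ2d, ptBlockIndex, Nat.ne_of_lt]]
    exact (hρ.submatrix _).transpose
  refine ⟨_, hA.fromBlocks_zero hB, ?_⟩
  rw [← charpoly_reindex (Equiv.ofBijective e (ptBlockIndex_bijective hd)).symm, reindex_apply,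
    Equiv.symm_symm, Equiv.coe_ofBijective, PT_ρ2d_submatrix_ptBlockIndex,
    charpoly_fromBlocks_zero₁₂]

theorem qubit_qudit_negative_eigenvalues_general (d : ℕ) (hd : 2 ≤ d)
    (x00 x11 : ℝ) (x01 : ℂ) (A B : ℕ → ℕ → ℂ)
    (hρ : (ρ2d d x00 x11 x01 A B).PosSemidef)
    (hΓ : (PT (ρ2d d x00 x11 x01 A B)).IsHermitian)
    (hX : (!![(x00 : ℂ), x01; starRingEnd ℂ x01, (x11 : ℂ)]).IsHermitian) :
    ((Finset.univ.val.map hΓ.eigenvalues).filter (fun t => t < 0) =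
      (Finset.univ.val.map hX.eigenvalues).filter (fun t => t < 0)) ∧
    ((PT (ρ2d d x00 x11 x01 A B)).PosSemidef ↔ x00 * x11 ≥ ‖x01‖ ^ 2) := by
  obtain ⟨Y, hY, hcharpoly⟩ := exists_posSemidef_charpoly_PT_ρ2d_eq_mul (by omega) hρ
  have hneg := hΓ.filter_neg_eigenvalues_eq_of_charpoly_eq_mul hX hY hcharpoly
  have hx00 : 0 ≤ x00 := by simpa [ρ2d] using hρ.diag_nonneg (i := (0, ⟨0, by omega⟩))
  have hx11 : 0 ≤ x11 := by simpa [ρ2d] using hρ.diag_nonneg (i := (1, ⟨d - 1, by omega⟩))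
  refine ⟨hneg, ?_⟩
  rw [hΓ.posSemidef_iff_filter_neg_eigenvalues_eq_zero, hneg,
    ← hX.posSemidef_iff_filter_neg_eigenvalues_eq_zero]
  exact posSemidef_fin_two_iff.trans (by simp [hx00, hx11])

/-- for the qubit-qudit family, the negative eigenvalues of `ρ^Γ`
are exactly the negative eigenvalues of `[[x₀₀, x₀₁],[x₀₁*, x₁₁]]`; in
particular `ρ` is PPT iff `x₀₀ x₁₁ ≥ |x₀₁|²`. -/
theorem qubit_qudit_negative_eigenvalues (d : ℕ) (hd : 2 ≤ d)
    (x00 x11 : ℝ) (x01 : ℂ) (A B : ℕ → ℕ → ℂ)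
    (hA : ∀ i j, A j i = starRingEnd ℂ (A i j))
    (hB : ∀ i j, B j i = starRingEnd ℂ (B i j))
    (hρ : (ρ2d d x00 x11 x01 A B).PosSemidef)
    (hΓ : (PT (ρ2d d x00 x11 x01 A B)).IsHermitian)
    (hX : (!![(x00 : ℂ), x01; starRingEnd ℂ x01, (x11 : ℂ)]).IsHermitian) :
    ((Finset.univ.val.map hΓ.eigenvalues).filter (fun t => t < 0) =
      (Finset.univ.val.map hX.eigenvalues).filter (fun t => t < 0)) ∧
    ((PT (ρ2d d x00 x11 x01 A B)).PosSemidef ↔ x00 * x11 ≥ ‖x01‖ ^ 2) :=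
  qubit_qudit_negative_eigenvalues_general d hd x00 x11 x01 A B hρ hΓ hX
end
end
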